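/- Let X be a complete toric variety over a field k, B a reduced torus-invariant Weil divisor on X, and L a line bundle on X with Iitaka dimension κ(X, L) ≥ 0 and L not isomorphic to O_X. If the sheaf Ω̃^a_X(log B) embeds into the free sheaf (∧^a M) ⊗_ℤ O_X, then H^0(X, Ω̃^a_X(log B) ⊗ L^{-1}) = 0 for every a ≥ 0. -/
import Mathlib


/-- Bogomolov-type vanishing (Theorem 2.19 of the paper): let `X` be a complete
toric variety over `k`, `B` a reduced torus-invariant Weil divisor, and `L` a
line bundle with Iitaka dimension `κ(X,L) ≥ 0` and `L ≇ O_X`.  If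
`Ω̃^a_X(log B)` embeds into the free sheaf `(⋀^a M) ⊗ O_X`, then
`H^0(X, Ω̃^a_X(log B) ⊗ L^{-1}) = 0`.

Model: the section ring `⊕_{i∈ℤ} H^0(X, L^i)` is a ℤ-graded family of
`k`-subspaces `R i` of an integral domain `A`, with `R i · R j ⊆ R (i+j)`,
`1 ∈ R 0` and `R 0 = k` (`X` complete and integral); `κ(X,L) ≥ 0` says some
`R m`, `m > 0`, is nonzero; `L ≇ O_X` says `L` has no nowhere vanishing
section, i.e. there are no `u ∈ R 1`, `v ∈ R (-1)` with `u·v = 1`.  The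
embedding `Ω̃^a(log B) ⊗ L^{-1} ⊆ (⋀^a M) ⊗ L^{-1}` gives on `H^0` an
injective `k`-linear map `ι` from `W = H^0(X, Ω̃^a_X(log B) ⊗ L^{-1})` into a
product of copies of `A` (indexed by a basis `ν` of `⋀^a M`) whose components
are sections of `L^{-1}`, i.e. lie in `R (-1)`.  Conclusion: `W = 0`. -/
theorem stmt9 (k A : Type) [Field k] [CommRing A] [IsDomain A] [Algebra k A]
    (R : ℤ → Submodule k A)
    (hmul : ∀ i j : ℤ, ∀ a ∈ R i, ∀ b ∈ R j, a * b ∈ R (i + j))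
    (hone : (1 : A) ∈ R 0)
    (h0 : ∀ a ∈ R 0, ∃ c : k, a = algebraMap k A c)
    (hκ : ∃ m : ℕ, 0 < m ∧ ∃ s ∈ R m, s ≠ 0)
    (hL : ¬ ∃ u ∈ R 1, ∃ v ∈ R (-1), u * v = 1)
    (ν W : Type) [AddCommGroup W] [Module k W]
    (ι : W →ₗ[k] (ν → A)) (hι : Function.Injective ι)
    (hrange : ∀ (w : W) (i : ν), ι w i ∈ R (-1)) :
    ∀ w : W, w = 0 := by
  -- First show `R (-1) = 0`.
  obtain ⟨m, hm, s, hs, hsne⟩ := hκ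
  have hR1 : ∀ v ∈ R (-1), v = 0 := by
    intro v hv
    by_contra hvne
    have key : ∀ n : ℕ, s * v ^ n ∈ R ((m : ℤ) - n) := by
      intro n
      induction n with
      | zero => simpa using hs
      | succ n ih =>
        have := hmul _ _ _ ih _ hv
        have h : ((m : ℤ) - n) + (-1) = (m : ℤ) - (n + 1) := by push_cast; ring
        rw [h] at this
        simpa [pow_succ, mul_assoc] using this
    have h0m : s * v ^ m ∈ R 0 := by simpa using key m
    obtain ⟨c, hc⟩ := h0 _ h0m
    rcases eq_or_ne c 0 with rfl | hcne
    · simp only [map_zero] at hc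
      rcases mul_eq_zero.mp hc with h | h
      · exact hsne h
      · exact hvne (pow_eq_zero_iff hm.ne' |>.mp h)
    · apply hL
      have h1 : s * v ^ (m - 1) ∈ R 1 := by
        have := key (m - 1)
        have h : (m : ℤ) - (m - 1 : ℕ) = 1 := by
          have := Nat.succ_pred_eq_of_pos hm
          push_cast [Nat.cast_sub hm]
          ring
        rwa [h] at this
      refine ⟨c⁻¹ • (s * v ^ (m - 1)), Submodule.smul_mem _ _ h1, v, hv, ?_⟩
      have hvm : v ^ m = v ^ (m - 1) * v := by
        rw [← pow_succ]; congr 1; omega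
      rw [Algebra.smul_def, mul_assoc, mul_assoc s, ← hvm, hc,
        ← map_mul, inv_mul_cancel₀ hcne, map_one]
  intro w
  apply hι
  ext i
  simp [hR1 _ (hrange w i)]
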